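/- Let α₁(v) = 1 - (1 + exp(-γ(v-c)))⁻¹ and α̃₁(v) = 1 - (1 + exp(-γ̃(v-c̃)))⁻¹ with γ, γ̃ > 0, and suppose α₁ and α̃₁ are not identically equal. Then the set of vectors {(α₁(v), -α̃₁(v), 1) : v ∈ ℝ} spans all of ℝ³. Consequently the only w ∈ ℝ³ satisfying α₁(v) w₁ - α̃₁(v) w₂ + w₃ = 0 for all v ∈ ℝ is w = 0. -/

import Mathlib

/-!
A linear relation `α₁ v * a - α̃₁ v * b + d = 0` holding for all `v` passes to the limits
`v → +∞`, where both weights tend to `0`, and `v → -∞`, where both tend to `1`: this gives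
`d = 0` and `a = b`. At a point where `α₁ v ≠ α̃₁ v` the relation becomes
`(α₁ v - α̃₁ v) * b = 0`, so `a = b = 0`. The spanning statement is the dual form: a proper subspace of `ℝ³` is
annihilated by a nonzero functional `x ↦ w ⬝ᵥ x`.
-/

open Filter Topology

theorem Submodule.span_eq_top_of_forall_dotProduct_eq_zero {K ι : Type*} [Field K] [Fintype ι]
    [DecidableEq ι] {S : Set (ι → K)} (h : ∀ w : ι → K, (∀ x ∈ S, w ⬝ᵥ x = 0) → w = 0) :
    Submodule.span K S = ⊤ := by
  rw [← Submodule.dualAnnihilator_eq_bot_iff, Submodule.eq_bot_iff]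
  intro f hf
  obtain ⟨w, rfl⟩ := (dotProductEquiv K ι).surjective f
  rw [h w fun x hx => (Submodule.mem_dualAnnihilator _).1 hf x (Submodule.subset_span hx),
    map_zero]

theorem Filter.Tendsto.eq_zero_of_mul_sub_mul_add_eq_zero {X : Type*} {l₀ l₁ : Filter X}
    [l₀.NeBot] [l₁.NeBot] {f g : X → ℝ}
    (hf₀ : Tendsto f l₀ (𝓝 0)) (hg₀ : Tendsto g l₀ (𝓝 0))
    (hf₁ : Tendsto f l₁ (𝓝 1)) (hg₁ : Tendsto g l₁ (𝓝 1)) (hfg : ∃ v, f v ≠ g v)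
    {a b d : ℝ} (h : ∀ v, f v * a - g v * b + d = 0) : a = 0 ∧ b = 0 ∧ d = 0 := by
  have hzero : (fun v => f v * a - g v * b + d) = fun _ => 0 := funext h
  have hd : 0 * a - 0 * b + d = 0 :=
    tendsto_nhds_unique (((hf₀.mul_const a).sub (hg₀.mul_const b)).add_const d)
      (hzero ▸ tendsto_const_nhds)
  have hab : 1 * a - 1 * b + d = 0 :=
    tendsto_nhds_unique (((hf₁.mul_const a).sub (hg₁.mul_const b)).add_const d)
      (hzero ▸ tendsto_const_nhds)
  obtain ⟨v, hv⟩ := hfg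
  have hfgb : (f v - g v) * b = 0 := by linear_combination h v - f v * hab - (1 - f v) * hd
  have hb : b = 0 := (mul_eq_zero.1 hfgb).resolve_left (sub_ne_zero.2 hv)
  refine ⟨?_, hb, ?_⟩ <;> linarith

theorem tendsto_logistic_atTop {γ : ℝ} (hγ : 0 < γ) (c : ℝ) :
    Tendsto (fun v : ℝ => 1 - (1 + Real.exp (-γ * (v - c)))⁻¹) atTop (𝓝 0) := by
  have hexp : Tendsto (fun v : ℝ => Real.exp (-γ * (v - c))) atTop (𝓝 0) :=
    Real.tendsto_exp_atBot.comp <|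
      (tendsto_atTop_add_const_right _ (-c) tendsto_id).const_mul_atTop_of_neg (neg_neg_of_pos hγ)
  simpa using (tendsto_const_nhds (x := (1 : ℝ))).sub
    ((tendsto_const_nhds.add hexp).inv₀ (by norm_num : (1 : ℝ) + 0 ≠ 0))

theorem tendsto_logistic_atBot {γ : ℝ} (hγ : 0 < γ) (c : ℝ) :
    Tendsto (fun v : ℝ => 1 - (1 + Real.exp (-γ * (v - c)))⁻¹) atBot (𝓝 1) := by
  have hexp : Tendsto (fun v : ℝ => Real.exp (-γ * (v - c))) atBot atTop :=
    Real.tendsto_exp_atTop.comp <|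
      (tendsto_atBot_add_const_right _ (-c) tendsto_id).const_mul_atBot_of_neg (neg_neg_of_pos hγ)
  simpa using (tendsto_const_nhds (x := (1 : ℝ))).sub (tendsto_inv_atTop_zero.comp
    (tendsto_atTop_add_const_left _ 1 hexp))

/-- If two logistic transition weights `α₁` and `α̃₁` are not identically equal, then
the vectors `(α₁(v), -α̃₁(v), 1)` span `ℝ³`; consequently the only `w ∈ ℝ³` with
`α₁(v) w₁ - α̃₁(v) w₂ + w₃ = 0` for all `v` is `w = 0`. -/
theorem logistic_vectors_span (γ γt c ct : ℝ) (hγ : 0 < γ) (hγt : 0 < γt)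
    (α₁ αt₁ : ℝ → ℝ)
    (hα : ∀ v, α₁ v = 1 - (1 + Real.exp (-γ * (v - c)))⁻¹)
    (hαt : ∀ v, αt₁ v = 1 - (1 + Real.exp (-γt * (v - ct)))⁻¹)
    (hne : ∃ v, α₁ v ≠ αt₁ v) :
    Submodule.span ℝ (Set.range fun v : ℝ => ![α₁ v, -αt₁ v, (1 : ℝ)]) = ⊤ ∧
      ∀ w : Fin 3 → ℝ, (∀ v : ℝ, α₁ v * w 0 - αt₁ v * w 1 + w 2 = 0) → w = 0 := by
  rw [← funext_iff] at hα hαt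
  have hker : ∀ w : Fin 3 → ℝ, (∀ v : ℝ, α₁ v * w 0 - αt₁ v * w 1 + w 2 = 0) → w = 0 := by
    intro w hw
    obtain ⟨h₀, h₁, h₂⟩ := (hα ▸ tendsto_logistic_atTop hγ c).eq_zero_of_mul_sub_mul_add_eq_zero
      (hαt ▸ tendsto_logistic_atTop hγt ct) (hα ▸ tendsto_logistic_atBot hγ c)
      (hαt ▸ tendsto_logistic_atBot hγt ct) hne hw
    ext i; fin_cases i <;> assumption
  refine ⟨Submodule.span_eq_top_of_forall_dotProduct_eq_zero fun w hw => hker w fun v => ?_, hker⟩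
  simpa [dotProduct, Fin.sum_univ_three, mul_comm, ← sub_eq_add_neg] using hw _ ⟨v, rfl⟩
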